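/- For every natural number N > 0, divisor d with 2 ≤ d < 2^N, and dividend n with 0 ≤ n < 2^N, letting p = ⌈log₂ d⌉, m = ⌈2^(N+p)/d⌉, m_lo = m - 2^N, and q = ⌊m_lo · n / 2^N⌋, we have ⌊n/d⌋ = ⌊(⌊(n - q)/2⌋ + q)/2^(p-1)⌋. -/

import Mathlib

/-!
Write `q = ⌊m_lo n / 2^N⌋`. Since `2^N ≤ m ≤ 2^(N+1)`, we have `q ≤ n` and `n + q = ⌊m n / 2^N⌋`,
and `⌊(n - q)/2⌋ + q` is the overflow-free form of `⌊(n + q)/2⌋`; so the right-hand side is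
`⌊m n / 2^(N+p)⌋`. Because `2^(N+p) ≤ m d < 2^(N+p) + d` and `n d < 2^(N+p)`, the error of the
approximation `m ≈ 2^(N+p)/d` is too small to change `⌊n/d⌋`.
-/

lemma le_mul_and_mul_lt_add_of_eq_ceil_div {K : Type*} [Field K] [LinearOrder K]
    [IsStrictOrderedRing K] [FloorRing K] {a b m : ℕ} (hb : 0 < b)
    (hm : (m : ℤ) = ⌈(a : K) / b⌉) : a ≤ m * b ∧ m * b < a + b := by
  have hbK : (0 : K) < b := by exact_mod_cast hb
  have hle : (a : K) / b ≤ m := by exact_mod_cast hm ▸ Int.le_ceil ((a : K) / b)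
  have hlt : (m : K) < a / b + 1 := by exact_mod_cast hm ▸ Int.ceil_lt_add_one ((a : K) / b)
  constructor
  · exact_mod_cast (div_le_iff₀ hbK).1 hle
  · have := (mul_lt_mul_iff_left₀ hbK).2 hlt
    rw [add_mul, div_mul_cancel₀ _ hbK.ne', one_mul] at this
    exact_mod_cast this

lemma mul_div_eq_div_of_le_mul_of_mul_lt_add {e d m n : ℕ} (hlo : e ≤ m * d)
    (hhi : m * d < e + d) (hn : n * d < e) : m * n / e = n / d := by
  have hd : 0 < d := Nat.pos_of_ne_zero (by rintro rfl; omega)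
  have hqd : n / d * d ≤ n := Nat.div_mul_le_self n d
  have hnd : n < (n / d + 1) * d := by
    rw [add_one_mul]; exact Nat.lt_div_mul_add hd
  apply Nat.div_eq_of_lt_le
  · calc n / d * e ≤ n / d * (m * d) := Nat.mul_le_mul_left _ hlo
      _ = m * (n / d * d) := by ring
      _ ≤ m * n := Nat.mul_le_mul_left m hqd
  · refine Nat.lt_of_mul_lt_mul_right (a := d) ?_
    calc m * n * d = m * d * n := by ring
      _ ≤ (e + (d - 1)) * n := Nat.mul_le_mul_right n (by omega)
      _ = e * n + (d - 1) * n := add_mul _ _ _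
      _ < e * n + e := by
        have : (d - 1) * n ≤ n * d := by rw [mul_comm]; exact Nat.mul_le_mul_left n (by omega)
        omega
      _ = e * (n + 1) := by ring
      _ ≤ e * ((n / d + 1) * d) := Nat.mul_le_mul_left e hnd
      _ = (n / d + 1) * e * d := by ring

lemma sub_div_two_add_eq_add_div_two {n q : ℕ} (h : q ≤ n) : (n - q) / 2 + q = (n + q) / 2 := by
  omega

lemma halve_sub_add_div_pow_eq_mul_div {a m n p : ℕ} (ha : 0 < a) (hm_lo : a ≤ m)
    (hm_hi : m ≤ 2 * a) (hp : 1 ≤ p) :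
    ((n - (m - a) * n / a) / 2 + (m - a) * n / a) / 2 ^ (p - 1) = m * n / (a * 2 ^ p) := by
  have hq : (m - a) * n / a ≤ n := by
    calc (m - a) * n / a ≤ a * n / a := Nat.div_le_div_right (Nat.mul_le_mul_right n (by omega))
      _ = n := Nat.mul_div_cancel_left n ha
  have hsum : n + (m - a) * n / a = m * n / a := by
    rw [show m * n = (m - a) * n + a * n by rw [← add_mul]; congr 1; omega,
      Nat.add_mul_div_left _ _ ha, add_comm]
  rw [sub_div_two_add_eq_add_div_two hq, hsum, Nat.div_div_eq_div_mul, Nat.div_div_eq_div_mul,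
    ← pow_succ', Nat.sub_add_cancel hp]

theorem stmt7_general (N : ℕ) (d : ℕ) (hd1 : 2 ≤ d)
    (n : ℕ) (hn : n < 2 ^ N) (m : ℕ)
    (hm : (m : ℤ) = ⌈(2 : ℚ) ^ (N + Nat.clog 2 d) / d⌉) :
    n / d = ((n - (m - 2 ^ N) * n / 2 ^ N) / 2 + (m - 2 ^ N) * n / 2 ^ N) /
      2 ^ (Nat.clog 2 d - 1) := by
  set p := Nat.clog 2 d
  have hp : 1 ≤ p := Nat.clog_pos one_lt_two hd1
  have hd_le : d ≤ 2 ^ p := Nat.le_pow_clog one_lt_two d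
  have hd_gt : 2 ^ p < 2 * d := by
    have : 2 ^ (p - 1) < d := Nat.pow_pred_clog_lt_self one_lt_two hd1
    have hpow : 2 ^ p = 2 * 2 ^ (p - 1) := by rw [← pow_succ', Nat.sub_add_cancel hp]
    omega
  obtain ⟨hlo, hhi⟩ := le_mul_and_mul_lt_add_of_eq_ceil_div (K := ℚ) (a := 2 ^ (N + p))
    (b := d) (m := m) (by omega) (by push_cast; exact hm)
  rw [pow_add] at hlo hhi
  have hm_lo : 2 ^ N ≤ m := by
    refine Nat.le_of_mul_le_mul_right ?_ (Nat.two_pow_pos p)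
    calc 2 ^ N * 2 ^ p ≤ m * d := hlo
      _ ≤ m * 2 ^ p := Nat.mul_le_mul_left m hd_le
  have hm_hi : m ≤ 2 * 2 ^ N := by
    refine Nat.le_of_lt_succ (Nat.lt_of_mul_lt_mul_right (a := d) ?_)
    calc m * d < 2 ^ N * 2 ^ p + d := hhi
      _ ≤ 2 ^ N * (2 * d) + d := by gcongr
      _ = (2 * 2 ^ N + 1) * d := by ring
  have hnd : n * d < 2 ^ N * 2 ^ p :=
    calc n * d < 2 ^ N * d := Nat.mul_lt_mul_of_pos_right hn (by omega)
      _ ≤ 2 ^ N * 2 ^ p := Nat.mul_le_mul_left _ hd_le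
  rw [halve_sub_add_div_pow_eq_mul_div (Nat.two_pow_pos N) hm_lo hm_hi hp,
    mul_div_eq_div_of_le_mul_of_mul_lt_add hlo hhi hnd]

theorem stmt7 (N : ℕ) (hN : 0 < N) (d : ℕ) (hd1 : 2 ≤ d) (hd2 : d < 2 ^ N)
    (n : ℕ) (hn : n < 2 ^ N) (m : ℕ)
    (hm : (m : ℤ) = ⌈(2 : ℚ) ^ (N + Nat.clog 2 d) / d⌉) :
    n / d = ((n - (m - 2 ^ N) * n / 2 ^ N) / 2 + (m - 2 ^ N) * n / 2 ^ N) /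
      2 ^ (Nat.clog 2 d - 1) :=
  stmt7_general N d hd1 n hn m hm
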